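/- arXiv:1209.2088 — 5 statements merged into one kernel-verified Lean document; each statement's English description precedes it below -/
import Mathlib

section
/- Suppose p = p(n) = (log n)/n + ξ(n) where ξ(n) = o((log n)/n). Then |R| = o(n) asymptotically almost surely; that is, for every ε > 0, the probability that |R| ≤ ε·n tends to 1 as n → ∞. -/
/-! Write `a j` for the probability that vertex `j` is reachable. A path to `j > 0` ends with
an edge `(i, j)` with `i < j`, and whether `i` is reachable depends only on edges into vertices
`≤ i`, so it is independent of that edge: `a j ≤ p * ∑ i < j, a i`, whence
`∑ i < m, a i ≤ (1 + p) ^ m`. Bounding the other `a j` by `1`,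
`E|R| ≤ (1 + p) ^ m + (n - m)`.
With `m = ⌊(1 - δ) n⌋` and `p n = (1 + o(1)) log n` this is at most `n ^ (1 - δ²) + δ n + 1`,
so `E|R| = o(n)`, and Markov's inequality concludes. -/

open MeasureTheory Filter

/-- The Bernoulli measure on `Bool` with success probability `p` (clamped to `[0,1]`). -/
noncomputable def bernMeasure (p : ℝ) : Measure Bool :=
  (min (ENNReal.ofReal p) 1) • Measure.dirac true +
    (1 - min (ENNReal.ofReal p) 1) • Measure.dirac false

instance (p : ℝ) : IsProbabilityMeasure (bernMeasure p) := by
  constructor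
  simp [bernMeasure]

/-- The ordered directed random graph on `n` vertices `v_1, …, v_n` (0-indexed as `0, …, n-1`):
each entry `ω a b` (for `a < b`, the only relevant ones) is an independent Bernoulli(p)
indicator of the presence of the directed edge from vertex `a` to vertex `b`. -/
noncomputable def graphMeasure (n : ℕ) (p : ℝ) : Measure (Fin n → Fin n → Bool) :=
  Measure.pi fun _ => Measure.pi fun _ => bernMeasure p

/-- The directed edge relation of the graph `ω` : an edge from `a` to `b` (vertices named
`0, …, n-1`, with vertex `k` standing for `v_{k+1}`) exists iff `a < b` and the
corresponding coordinate is `true`. -/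
def EdgeRel (n : ℕ) (ω : Fin n → Fin n → Bool) (a b : ℕ) : Prop :=
  ∃ (ha : a < n) (hb : b < n), a < b ∧ ω ⟨a, ha⟩ ⟨b, hb⟩ = true

/-- Vertex `j` (i.e. `v_{j+1}`) is reachable from vertex `0` (i.e. `v_1`) by a directed path. -/
def Reachable (n : ℕ) (ω : Fin n → Fin n → Bool) (j : ℕ) : Prop :=
  Relation.ReflTransGen (EdgeRel n ω) 0 j

-- `RSet n ω` is `R`, the set of vertices reachable from `v_1` (including `v_1`).
open Classical in
noncomputable def RSet (n : ℕ) (ω : Fin n → Fin n → Bool) : Finset ℕ :=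
  (Finset.range n).filter fun j => Reachable n ω j

open ProbabilityTheory Asymptotics

instance (n : ℕ) (r : ℝ) : IsProbabilityMeasure (graphMeasure n r) := by
  unfold graphMeasure; infer_instance

theorem ProbabilityTheory.iIndepFun.measure_inter_preimage_eq_mul_of_forall_ne
    {Ω ι : Type*} [MeasurableSpace Ω] {μ : Measure Ω} [Fintype ι]
    {β : ι → Type*} [∀ i, MeasurableSpace (β i)] [∀ i, Countable (β i)]
    [∀ i, MeasurableSingletonClass (β i)]
    {X : ∀ i, Ω → β i} (hX : iIndepFun X μ) (hXm : ∀ i, Measurable (X i)) (c : ι) {A : Set Ω}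
    (hA : ∀ ω ω', (∀ i ≠ c, X i ω = X i ω') → ω ∈ A → ω' ∈ A) {T : Set (β c)}
    (hT : MeasurableSet T) :
    μ (A ∩ X c ⁻¹' T) = μ A * μ (X c ⁻¹' T) := by
  classical
  set Y : Ω → ∀ i : (Finset.univ.erase c : Finset ι), β i := fun ω i => X i ω
  set Z : Ω → ∀ i : ({c} : Finset ι), β i := fun ω i => X i ω
  have hYZ : IndepFun Y Z μ :=
    hX.indepFun_finset _ _ (Finset.disjoint_singleton_right.2 (Finset.notMem_erase c _)) hXm
  have hAY : A = Y ⁻¹' (Y '' A) := by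
    refine (Set.subset_preimage_image Y A).antisymm ?_
    rintro ω' ⟨ω, hω, hY⟩
    refine hA ω ω' (fun i hi => ?_) hω
    exact congrFun hY ⟨i, Finset.mem_erase.2 ⟨hi, Finset.mem_univ i⟩⟩
  have hcZ : X c ⁻¹' T = Z ⁻¹' {z | z ⟨c, Finset.mem_singleton_self c⟩ ∈ T} := rfl
  rw [hAY, hcZ]
  exact hYZ.measure_inter_preimage_eq_mul _ _ (Set.to_countable _).measurableSet
    (measurable_pi_apply _ hT)

theorem iIndepFun_graphMeasure (n : ℕ) (r : ℝ) :
    iIndepFun (fun (e : Σ _ : Fin n, Fin n) (ω : Fin n → Fin n → Bool) => ω e.1 e.2)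
      (graphMeasure n r) := by
  have h := iIndepFun_uncurry_infinitePi (fun (_ : Fin n) (_ : Fin n) => bernMeasure r)
    (X := fun _ _ => id) (fun _ _ => measurable_id)
  simpa only [graphMeasure, Measure.infinitePi_eq_pi, id] using h

theorem graphMeasure_setOf_eq_true (n : ℕ) (r : ℝ) (a b : Fin n) :
    graphMeasure n r {ω | ω a b = true} = bernMeasure r {true} := by
  have h := ((measurePreserving_eval (fun _ => bernMeasure r) b).comp
    (measurePreserving_eval (fun _ : Fin n => Measure.pi fun _ : Fin n => bernMeasure r) a))
  exact h.measure_preimage (measurableSet_singleton true).nullMeasurableSet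

theorem bernMeasure_real_singleton_true_le {r : ℝ} (hr : 0 ≤ r) :
    (bernMeasure r).real {true} ≤ r := by
  have htrue : bernMeasure r {true} = min (ENNReal.ofReal r) 1 := by simp [bernMeasure]
  rw [measureReal_def, htrue]
  exact ENNReal.toReal_le_of_le_ofReal hr (min_le_left _ _)

theorem Reachable.of_forall_le {n : ℕ} {ω ω' : Fin n → Fin n → Bool} {j : ℕ}
    (h : Reachable n ω j) (hω : ∀ a b : Fin n, (b : ℕ) ≤ j → ω a b = ω' a b) :
    Reachable n ω' j := by
  induction h with
  | refl => exact .refl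
  | @tail i k _ hik ih =>
    obtain ⟨hi, hk, hlt, hedge⟩ := hik
    exact .tail (ih fun a b hb => hω a b (by omega)) ⟨hi, hk, hlt, hω _ ⟨k, hk⟩ le_rfl ▸ hedge⟩

theorem measureReal_reachable_inter_edgeRel {n i j : ℕ} (r : ℝ) (hij : i < j) (hjn : j < n) :
    (graphMeasure n r).real ({ω | Reachable n ω i} ∩ {ω | EdgeRel n ω i j}) =
      (graphMeasure n r).real {ω | Reachable n ω i} * (bernMeasure r).real {true} := by
  have hin : i < n := hij.trans hjn
  have hedge : {ω | EdgeRel n ω i j} =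
      {ω : Fin n → Fin n → Bool | ω ⟨i, hin⟩ ⟨j, hjn⟩ = true} := by
    ext ω
    exact ⟨fun ⟨_, _, _, h⟩ => h, fun h => ⟨hin, hjn, hij, h⟩⟩
  have hind := (iIndepFun_graphMeasure n r).measure_inter_preimage_eq_mul_of_forall_ne
    (fun _ => measurable_pi_apply _ |>.eval) ⟨⟨i, hin⟩, ⟨j, hjn⟩⟩ (A := {ω | Reachable n ω i})
    (fun ω ω' hωω' h => h.of_forall_le fun a b hb => hωω' ⟨a, b⟩ (by
      rintro ⟨⟩; exact absurd hb (not_le.2 hij))) (measurableSet_singleton true)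
  rw [hedge, measureReal_def, measureReal_def, measureReal_def, ← ENNReal.toReal_mul]
  exact congrArg ENNReal.toReal (hind.trans (congrArg _ (graphMeasure_setOf_eq_true n r _ _)))

theorem measureReal_reachable_le {n j : ℕ} {r : ℝ} (hr : 0 ≤ r) (hj : j ≠ 0) (hjn : j < n) :
    (graphMeasure n r).real {ω | Reachable n ω j} ≤
      r * ∑ i ∈ Finset.range j, (graphMeasure n r).real {ω | Reachable n ω i} := by
  have hsub : {ω | Reachable n ω j} ⊆
      ⋃ i ∈ Finset.range j, {ω | Reachable n ω i} ∩ {ω | EdgeRel n ω i j} := by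
    intro ω hω
    rcases Relation.ReflTransGen.cases_tail hω with h0 | ⟨i, hi, hij⟩
    · exact (hj h0).elim
    · exact Set.mem_biUnion (Finset.mem_range.2 hij.2.2.1) ⟨hi, hij⟩
  calc (graphMeasure n r).real {ω | Reachable n ω j}
      ≤ ∑ i ∈ Finset.range j,
          (graphMeasure n r).real ({ω | Reachable n ω i} ∩ {ω | EdgeRel n ω i j}) :=
        (measureReal_mono hsub (measure_ne_top _ _)).trans (measureReal_biUnion_finset_le _ _)
    _ ≤ ∑ i ∈ Finset.range j, (graphMeasure n r).real {ω | Reachable n ω i} * r := by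
        gcongr with i hi
        rw [measureReal_reachable_inter_edgeRel r (Finset.mem_range.1 hi) hjn]
        exact mul_le_mul_of_nonneg_left (bernMeasure_real_singleton_true_le hr)
          measureReal_nonneg
    _ = r * ∑ i ∈ Finset.range j, (graphMeasure n r).real {ω | Reachable n ω i} := by
        rw [Finset.mul_sum]; simp_rw [mul_comm r]

theorem sum_range_le_one_add_pow {a : ℕ → ℝ} {r : ℝ} {M : ℕ} (hr : 0 ≤ r) (h0 : a 0 ≤ 1)
    (ha : ∀ j, j ≠ 0 → j < M → a j ≤ r * ∑ i ∈ Finset.range j, a i) {m : ℕ} (hm : m ≤ M) :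
    ∑ i ∈ Finset.range m, a i ≤ (1 + r) ^ m := by
  induction m with
  | zero => simp
  | succ m ih =>
    rw [Finset.sum_range_succ, pow_succ']
    rcases Nat.eq_zero_or_pos m with rfl | hm0
    · simp only [Finset.range_zero, Finset.sum_empty, zero_add, pow_zero, mul_one]
      linarith
    · calc ∑ i ∈ Finset.range m, a i + a m
          ≤ (1 + r) * ∑ i ∈ Finset.range m, a i := by
            linarith [ha m hm0.ne' (by omega)]
        _ ≤ (1 + r) * (1 + r) ^ m := by gcongr; exact ih (by omega)

theorem integral_card_RSet (n : ℕ) (r : ℝ) :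
    ∫ ω, ((RSet n ω).card : ℝ) ∂graphMeasure n r =
      ∑ j ∈ Finset.range n, (graphMeasure n r).real {ω | Reachable n ω j} := by
  classical
  have hcard : ∀ ω, ((RSet n ω).card : ℝ) =
      ∑ j ∈ Finset.range n, {ω | Reachable n ω j}.indicator 1 ω := by
    intro ω
    simp [RSet, Set.indicator_apply]
  simp_rw [hcard]
  rw [integral_finsetSum _ fun _ _ => .of_finite]
  exact Finset.sum_congr rfl fun j _ => integral_indicator_one (Set.toFinite _).measurableSet

theorem integral_card_RSet_le {n m : ℕ} {r : ℝ} (hr : 0 ≤ r) (hm : m ≤ n) :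
    ∫ ω, ((RSet n ω).card : ℝ) ∂graphMeasure n r ≤ (1 + r) ^ m + (n - m) := by
  rw [integral_card_RSet, ← Finset.sum_range_add_sum_Ico _ hm]
  gcongr
  · exact sum_range_le_one_add_pow hr measureReal_le_one
      (fun j hj hjn => measureReal_reachable_le hr hj hjn) hm
  · calc ∑ j ∈ Finset.Ico m n, (graphMeasure n r).real {ω | Reachable n ω j}
        ≤ ∑ _j ∈ Finset.Ico m n, (1 : ℝ) := Finset.sum_le_sum fun _ _ => measureReal_le_one
      _ = n - m := by simp [Nat.cast_sub hm]

theorem eventually_abs_mul_sub_log_le {p ξ : ℕ → ℝ}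
    (hξ : ξ =o[atTop] fun n : ℕ => Real.log n / n)
    (hp : ∀ n : ℕ, p n = Real.log n / n + ξ n) {δ : ℝ} (hδ : 0 < δ) :
    ∀ᶠ n : ℕ in atTop, |p n * n - Real.log n| ≤ δ * Real.log n := by
  filter_upwards [hξ.bound hδ, eventually_gt_atTop 0] with n hn hn0
  have hn0' : (0 : ℝ) < n := Nat.cast_pos.2 hn0
  have hlog : 0 ≤ Real.log n / n := div_nonneg (Real.log_natCast_nonneg n) hn0'.le
  rw [Real.norm_eq_abs, Real.norm_eq_abs, abs_of_nonneg hlog] at hn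
  calc |p n * n - Real.log n| = |ξ n| * n := by
        rw [hp, add_mul, div_mul_cancel₀ _ hn0'.ne', add_sub_cancel_left, abs_mul,
          Nat.abs_cast]
    _ ≤ δ * (Real.log n / n) * n := by gcongr
    _ = δ * Real.log n := by field_simp

theorem eventually_integral_card_RSet_div_le {p ξ : ℕ → ℝ}
    (hξ : ξ =o[atTop] fun n : ℕ => Real.log n / n)
    (hp : ∀ n : ℕ, p n = Real.log n / n + ξ n) {δ : ℝ} (hδ : 0 < δ) (hδ1 : δ < 1) :
    ∀ᶠ n : ℕ in atTop, (∫ ω, ((RSet n ω).card : ℝ) ∂graphMeasure n (p n)) / n ≤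
      (n : ℝ) ^ (-δ ^ 2) + δ + 1 / n := by
  filter_upwards [eventually_abs_mul_sub_log_le hξ hp hδ, eventually_gt_atTop 0] with n hpn hn0
  have hn : (0 : ℝ) < n := Nat.cast_pos.2 hn0
  have hlog := Real.log_natCast_nonneg n
  obtain ⟨hpn_lo, hpn_hi⟩ := abs_le.1 hpn
  have hp0 : 0 ≤ p n := by
    refine nonneg_of_mul_nonneg_left ?_ hn
    nlinarith
  set m := ⌊(1 - δ) * n⌋₊
  have hm_le : (m : ℝ) ≤ (1 - δ) * n := Nat.floor_le (by nlinarith)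
  have hm_gt : (1 - δ) * n < m + 1 := Nat.lt_floor_add_one _
  have hmn : m ≤ n := by
    have : (m : ℝ) ≤ n := hm_le.trans (by nlinarith)
    exact_mod_cast this
  have hpow : (1 + p n) ^ m ≤ n * (n : ℝ) ^ (-δ ^ 2) := calc
    (1 + p n) ^ m ≤ Real.exp (p n) ^ m := by
        gcongr; linarith [Real.add_one_le_exp (p n)]
    _ = Real.exp (p n * m) := by rw [← Real.exp_nat_mul, mul_comm]
    _ ≤ Real.exp (Real.log n * (1 - δ ^ 2)) := by
        refine Real.exp_le_exp.2 ?_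
        calc p n * m ≤ p n * ((1 - δ) * n) := by gcongr
          _ = (1 - δ) * (p n * n) := by ring
          _ ≤ (1 - δ) * ((1 + δ) * Real.log n) := by gcongr ?_ * ?_; linarith
          _ = Real.log n * (1 - δ ^ 2) := by ring
    _ = n * (n : ℝ) ^ (-δ ^ 2) := by
        rw [← Real.rpow_def_of_pos hn, sub_eq_add_neg, Real.rpow_add hn, Real.rpow_one]
  rw [div_le_iff₀ hn]
  calc ∫ ω, ((RSet n ω).card : ℝ) ∂graphMeasure n (p n) ≤ (1 + p n) ^ m + (n - m) :=
        integral_card_RSet_le hp0 hmn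
    _ ≤ n * (n : ℝ) ^ (-δ ^ 2) + (δ * n + 1) := by gcongr; linarith
    _ = ((n : ℝ) ^ (-δ ^ 2) + δ + 1 / n) * n := by field_simp; ring

theorem tendsto_integral_card_RSet_div {p ξ : ℕ → ℝ}
    (hξ : ξ =o[atTop] fun n : ℕ => Real.log n / n)
    (hp : ∀ n : ℕ, p n = Real.log n / n + ξ n) :
    Tendsto (fun n : ℕ => (∫ ω, ((RSet n ω).card : ℝ) ∂graphMeasure n (p n)) / n)
      atTop (nhds 0) := by
  refine tendsto_order.2 ⟨fun a ha => .of_forall fun n => ha.trans_le ?_, fun η hη => ?_⟩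
  · exact div_nonneg (integral_nonneg fun _ => Nat.cast_nonneg _) (Nat.cast_nonneg _)
  set δ := min (η / 3) (1 / 2)
  have hδ : 0 < δ := lt_min (by positivity) (by norm_num)
  have hrpow : Tendsto (fun n : ℕ => (n : ℝ) ^ (-δ ^ 2)) atTop (nhds 0) :=
    (tendsto_rpow_neg_atTop (by positivity)).comp tendsto_natCast_atTop_atTop
  have hη3 : (0 : ℝ) < η / 3 := by positivity
  filter_upwards [eventually_integral_card_RSet_div_le hξ hp hδ
      (by linarith [min_le_right (η / 3) (1 / 2)]),
    hrpow.eventually (gt_mem_nhds hη3),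
    tendsto_one_div_atTop_nhds_zero_nat.eventually (gt_mem_nhds hη3)] with n hE hr h1
  linarith [min_le_left (η / 3) (1 / 2)]

theorem one_sub_div_le_measureReal_card_RSet_le (n : ℕ) (r : ℝ) {t : ℝ} (ht : 0 < t) :
    1 - (∫ ω, ((RSet n ω).card : ℝ) ∂graphMeasure n r) / t ≤
      (graphMeasure n r).real {ω | ((RSet n ω).card : ℝ) ≤ t} := by
  have hmarkov := mul_meas_ge_le_integral_of_nonneg (μ := graphMeasure n r)
    (.of_forall fun ω => Nat.cast_nonneg (RSet n ω).card) .of_finite t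
  have hbad : (graphMeasure n r).real {ω | ((RSet n ω).card : ℝ) ≤ t}ᶜ ≤
      (graphMeasure n r).real {ω | t ≤ ((RSet n ω).card : ℝ)} :=
    measureReal_mono fun ω (hω : ¬_ ≤ t) => (not_le.1 hω).le
  rw [measureReal_compl (Set.toFinite _).measurableSet, probReal_univ] at hbad
  rw [sub_le_comm, le_div_iff₀ ht]
  nlinarith

open Asymptotics in
/-- If `p n = (log n)/n + ξ n` with `ξ = o((log n)/n)`, then `|R| = o(n)`
a.a.s.: for every `ε > 0`, the probability that `|R| ≤ ε·n` tends to `1` as `n → ∞`. -/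
theorem reachable_card_aas_of_eq_one (p ξ : ℕ → ℝ)
    (hξ : ξ =o[atTop] fun n : ℕ => Real.log n / n)
    (hp : ∀ n : ℕ, p n = Real.log n / n + ξ n)
    (ε : ℝ) (hε : 0 < ε) :
    Tendsto (fun n : ℕ => graphMeasure n (p n)
        {ω | ((RSet n ω).card : ℝ) ≤ ε * n})
      atTop (nhds 1) := by
  rw [← ENNReal.tendsto_toReal_iff (fun _ => measure_ne_top _ _) ENNReal.one_ne_top,
    ENNReal.toReal_one]
  have hlower : Tendsto (fun n : ℕ =>
      1 - (∫ ω, ((RSet n ω).card : ℝ) ∂graphMeasure n (p n)) / n / ε) atTop (nhds 1) := by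
    simpa using tendsto_const_nhds.sub ((tendsto_integral_card_RSet_div hξ hp).div_const ε)
  refine tendsto_of_tendsto_of_tendsto_of_le_of_le' hlower tendsto_const_nhds ?_
    (.of_forall fun n => measureReal_le_one)
  filter_upwards [eventually_gt_atTop 0] with n hn
  rw [div_div, mul_comm (n : ℝ)]
  exact one_sub_div_le_measureReal_card_RSet_le n (p n) (by positivity)
end

section
/- For every n, every p ∈ [0,1], and every index i with 2 ≤ i ≤ n, the probability that v_i is reachable from v_1 in the ordered directed random graph is at most p·(1+p)^{i-2}, and hence at most p·e^{p·i}. -/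
open MeasureTheory Filter

/-!
If `v_t` is reachable from `v_1`, then all edges of some increasing path
`v_1 = x_0 < x_1 < ⋯ < x_k = v_t` are present. The path is determined by its set `S` of interior
vertices, a subset of the `t - 2` vertices strictly between `v_1` and `v_t`, and its `|S| + 1`
distinct edges are all present with probability `p ^ (|S| + 1)`. The union bound over `S` gives
`∑_S p ^ (|S| + 1) = p (1 + p) ^ (t - 2)`, and `1 + p ≤ e ^ p` gives the exponential form.
-/

open Finset

section IncreasingPath

variable {α : Type*} [LinearOrder α]

def increasingPathEdges (V : Finset α) : Finset (α × α) :=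
  (V.sort.zip V.sort.tail).toFinset

lemma List.card_toFinset_zip_tail {β : Type*} [DecidableEq β] {L : List β} (hL : L.Nodup) :
    #(L.zip L.tail).toFinset = L.length - 1 := by
  have hnodup : (L.zip L.tail).Nodup := by
    refine List.Nodup.of_map Prod.snd ?_
    rw [List.map_snd_zip (by simp)]
    exact hL.sublist (List.tail_sublist L)
  simp [List.toFinset_card_of_nodup hnodup]

lemma card_increasingPathEdges (V : Finset α) : #(increasingPathEdges V) = #V - 1 := by
  rw [increasingPathEdges, List.card_toFinset_zip_tail (V.sort_nodup _), Finset.length_sort]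

lemma List.IsChain.rel_of_mem_zip_tail {β : Type*} {r : β → β → Prop} {L : List β}
    (h : L.IsChain r) {e : β × β} (he : e ∈ L.zip L.tail) : r e.1 e.2 := by
  induction L with
  | nil => simp at he
  | cons a l ih =>
    cases l with
    | nil => simp at he
    | cons b l =>
      rw [List.isChain_cons_cons] at h
      rcases List.mem_cons.1 he with rfl | he
      · exact h.1
      · exact ih h.2 he

lemma Finset.insert_insert_inter_Ioo [LocallyFiniteOrder α] {z t : α} {V : Finset α}
    (hz : z ∈ V) (ht : t ∈ V) (hV : (V : Set α) ⊆ Set.Icc z t) :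
    insert z (insert t (V ∩ Ioo z t)) = V := by
  ext x
  have := @hV x
  simp only [mem_insert, mem_inter, mem_Ioo, Set.mem_Icc, mem_coe] at this ⊢
  grind

lemma exists_subset_Ioo_of_reflTransGen [LocallyFiniteOrder α] {r : α → α → Prop}
    (hr : ∀ a b, r a b → a < b) {z t : α} (h : Relation.ReflTransGen r z t) :
    ∃ S ⊆ Ioo z t, ∀ e ∈ increasingPathEdges (insert z (insert t S)), r e.1 e.2 := by
  obtain ⟨l, hchain, hlast⟩ := List.exists_isChain_cons_of_relationReflTransGen h
  have hsorted : (z :: l).Pairwise (· < ·) :=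
    List.isChain_iff_pairwise.1 (hchain.imp fun a b hab => hr a b hab)
  have hsort : (z :: l).toFinset.sort = z :: l :=
    (List.toFinset_sort _ (hsorted.imp ne_of_lt)).2 (hsorted.imp le_of_lt)
  have hmem_Icc : ((z :: l).toFinset : Set α) ⊆ Set.Icc z t := by
    intro x hx
    rw [List.coe_toFinset, Set.mem_ofPred_eq] at hx
    refine ⟨?_, hlast ▸ (hsorted.imp le_of_lt).rel_getLast hx⟩
    rcases List.mem_cons.1 hx with rfl | hx
    · exact le_rfl
    · exact (List.rel_of_pairwise_cons hsorted hx).le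
  have ht : t ∈ (z :: l).toFinset := hlast ▸ List.mem_toFinset.2 (List.getLast_mem _)
  refine ⟨(z :: l).toFinset ∩ Ioo z t, inter_subset_right, fun e he => ?_⟩
  rw [insert_insert_inter_Ioo (by simp) ht hmem_Icc, increasingPathEdges, hsort,
    List.mem_toFinset] at he
  exact hchain.rel_of_mem_zip_tail he

end IncreasingPath

section CylinderEvent

variable {ι κ β : Type*} [Fintype ι] [Fintype κ] [MeasurableSpace β]

lemma MeasureTheory.Measure.pi_pi_setOf_forall_mem (μ : Measure β) [IsProbabilityMeasure μ]
    (E : Finset (ι × κ)) (s : Set β) :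
    (Measure.pi fun _ : ι => Measure.pi fun _ : κ => μ) {ω | ∀ e ∈ E, ω e.1 e.2 ∈ s} =
      μ s ^ #E := by
  classical
  have hpi : {ω : ι → κ → β | ∀ e ∈ E, ω e.1 e.2 ∈ s} =
      Set.univ.pi fun a => Set.univ.pi fun b => if (a, b) ∈ E then s else Set.univ := by
    ext ω
    simp only [Set.mem_ofPred_eq, Set.mem_pi, Set.mem_univ, true_implies, Prod.forall]
    refine forall₂_congr fun a b => ?_
    split_ifs <;> simp_all
  calc _ = ∏ a, ∏ b, if (a, b) ∈ E then μ s else 1 := by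
        simp only [hpi, Measure.pi_pi]
        refine prod_congr rfl fun a _ => prod_congr rfl fun b _ => ?_
        split_ifs <;> simp
    _ = μ s ^ #E := by
        rw [← Fintype.prod_prod_type (fun x => if x ∈ E then μ s else 1), prod_ite_mem,
          univ_inter, prod_const]

end CylinderEvent

lemma bernMeasure_singleton_true {p : ℝ} (hp1 : p ≤ 1) :
    bernMeasure p {true} = ENNReal.ofReal p := by
  simp [bernMeasure, ENNReal.ofReal_le_one.2 hp1]

lemma graphMeasure_setOf_forall_mem {n : ℕ} {p : ℝ} (hp1 : p ≤ 1) (E : Finset (Fin n × Fin n)) :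
    graphMeasure n p {ω | ∀ e ∈ E, ω e.1 e.2 = true} = ENNReal.ofReal p ^ #E := by
  rw [← bernMeasure_singleton_true hp1, ← Measure.pi_pi_setOf_forall_mem]
  rfl

lemma reflTransGen_of_reachable {n : ℕ} {ω : Fin n → Fin n → Bool} {j : ℕ}
    (h : Reachable n ω j) (hn : 0 < n) (hj : j < n) :
    Relation.ReflTransGen (fun a b : Fin n => a < b ∧ ω a b = true) ⟨0, hn⟩ ⟨j, hj⟩ := by
  induction h with
  | refl => exact .refl
  | tail _ hbc ih =>
    obtain ⟨hb, hc, hlt, hω⟩ := hbc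
    exact (ih hb).tail ⟨Fin.mk_lt_mk.2 hlt, hω⟩

lemma Finset.sum_powerset_pow_card_succ {R ι : Type*} [CommSemiring R] (s : Finset ι) (q : R) :
    ∑ S ∈ s.powerset, q ^ (#S + 1) = q * (1 + q) ^ #s := by
  have := sum_pow_mul_eq_add_pow q 1 s
  simp only [one_pow, mul_one] at this
  simp_rw [pow_succ, ← sum_mul, this, add_comm q, mul_comm]

lemma graphMeasure_reachable_le {n : ℕ} {p : ℝ} (hp1 : p ≤ 1) {j : ℕ} (hj : 0 < j)
    (hjn : j < n) :
    graphMeasure n p {ω | Reachable n ω j} ≤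
      ENNReal.ofReal p * (1 + ENNReal.ofReal p) ^ (j - 1) := by
  set q := ENNReal.ofReal p
  let z : Fin n := ⟨0, hj.trans hjn⟩
  let t : Fin n := ⟨j, hjn⟩
  let pathEvent (S : Finset (Fin n)) : Set (Fin n → Fin n → Bool) :=
    {ω | ∀ e ∈ increasingPathEdges (insert z (insert t S)), ω e.1 e.2 = true}
  have hcover : {ω | Reachable n ω j} ⊆ ⋃ S ∈ (Ioo z t).powerset, pathEvent S := by
    intro ω hω
    obtain ⟨S, hS, hpath⟩ := exists_subset_Ioo_of_reflTransGen (fun _ _ h => h.1)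
      (reflTransGen_of_reachable hω _ hjn)
    exact Set.mem_biUnion (mem_powerset.2 hS) fun e he => (hpath e he).2
  have hprob : ∀ S ∈ (Ioo z t).powerset, graphMeasure n p (pathEvent S) = q ^ (#S + 1) := by
    intro S hS
    have hzt : z < t := Fin.mk_lt_mk.2 hj
    have hz : z ∉ insert t S := by
      simp only [mem_insert, not_or]
      exact ⟨hzt.ne, fun hzS => lt_irrefl z (mem_Ioo.1 (mem_powerset.1 hS hzS)).1⟩
    have ht : t ∉ S := fun htS => lt_irrefl t (mem_Ioo.1 (mem_powerset.1 hS htS)).2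
    rw [graphMeasure_setOf_forall_mem hp1, card_increasingPathEdges, card_insert_of_notMem hz,
      card_insert_of_notMem ht, Nat.add_sub_cancel]
  calc graphMeasure n p {ω | Reachable n ω j}
      ≤ ∑ S ∈ (Ioo z t).powerset, graphMeasure n p (pathEvent S) :=
        (measure_mono hcover).trans (measure_biUnion_finset_le _ _)
    _ = ∑ S ∈ (Ioo z t).powerset, q ^ (#S + 1) := sum_congr rfl hprob
    _ = q * (1 + q) ^ (j - 1) := by rw [sum_powerset_pow_card_succ, Fin.card_Ioo]; rfl

lemma one_add_pow_le_exp_mul {p : ℝ} (hp : 0 ≤ p) {k m : ℕ} (hkm : k ≤ m) :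
    (1 + p) ^ k ≤ Real.exp (p * m) :=
  calc (1 + p) ^ k ≤ Real.exp p ^ k := by gcongr; linarith [Real.add_one_le_exp p]
    _ = Real.exp (p * k) := by rw [← Real.exp_nat_mul, mul_comm]
    _ ≤ Real.exp (p * m) := by gcongr

/-- For every `n`, every `p ∈ [0,1]` and every `2 ≤ i ≤ n`, the probability
that `v_i` is reachable from `v_1` is at most `p·(1+p)^{i-2}`, hence at most `p·e^{p·i}`. -/
theorem prob_reachable_le (n : ℕ) (p : ℝ) (hp0 : 0 ≤ p) (hp1 : p ≤ 1)
    (i : ℕ) (h2 : 2 ≤ i) (hin : i ≤ n) :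
    graphMeasure n p {ω | Reachable n ω (i - 1)} ≤
        ENNReal.ofReal (p * (1 + p) ^ (i - 2)) ∧
    ENNReal.ofReal (p * (1 + p) ^ (i - 2)) ≤ ENNReal.ofReal (p * Real.exp (p * i)) := by
  refine ⟨?_, ENNReal.ofReal_le_ofReal <|
    mul_le_mul_of_nonneg_left (one_add_pow_le_exp_mul hp0 (Nat.sub_le i 2)) hp0⟩
  rw [ENNReal.ofReal_mul hp0, ENNReal.ofReal_pow (by linarith),
    ENNReal.ofReal_add zero_le_one hp0, ENNReal.ofReal_one, show i - 2 = i - 1 - 1 by omega]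
  exact graphMeasure_reachable_le hp1 (by omega) (by omega)
end

section
/- There is a constant C > 0 such that for every p ∈ (0,1) and every positive integer t, Σ_{i=1}^{∞} d_t(i)·(1−p)^{i} ≤ (log t + C)/p. -/
/-!
Expanding `d_t(i)` as a sum over the divisors `d ≤ t` and exchanging the sums turns the series
into the Lambert sum `∑_{d ≤ t} x^d / (1 - x^d)` with `x = 1 - p`. Since
`1 - x^d = (1 - x)(1 + x + ⋯ + x^{d-1}) ≥ p d x^d`, its `d`-th term is at most `1 / (p d)`,
so the series is at most `H_t / p ≤ (log t + 1) / p`.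
-/

/-- `dCount t i` is `d_t(i)`, the number of positive divisors of `i` that are at most `t`. -/
def dCount (t i : ℕ) : ℕ := (i.divisors.filter fun d => d ≤ t).card

open Finset

lemma dCount_eq_card_filter_dvd (t : ℕ) {n : ℕ} (hn : n ≠ 0) :
    dCount t n = #{d ∈ Icc 1 t | d ∣ n} := by
  unfold dCount
  congr 1
  ext d
  simp only [mem_filter, Nat.mem_divisors, mem_Icc]
  constructor
  · rintro ⟨⟨hd, -⟩, hdt⟩
    exact ⟨⟨Nat.pos_of_dvd_of_pos hd (Nat.pos_of_ne_zero hn), hdt⟩, hd⟩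
  · rintro ⟨⟨-, hdt⟩, hd⟩
    exact ⟨⟨hd, hn⟩, hdt⟩

lemma summable_ite_dvd_pow {x : ℝ} (hx₀ : 0 ≤ x) (hx₁ : x < 1) (d : ℕ) :
    Summable fun i : ℕ => if d ∣ i + 1 then x ^ (i + 1) else 0 := by
  have hgeom : Summable fun i : ℕ => x ^ (i + 1) := by
    simpa only [pow_succ] using (summable_geometric_of_lt_one hx₀ hx₁).mul_right x
  refine hgeom.of_nonneg_of_le (fun i => ?_) (fun i => ?_)
  · split_ifs <;> positivity
  · split_ifs
    · exact le_rfl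
    · positivity

lemma tsum_ite_dvd_pow {x : ℝ} (hx₀ : 0 ≤ x) (hx₁ : x < 1) {d : ℕ} (hd : 0 < d) :
    (∑' i : ℕ, if d ∣ i + 1 then x ^ (i + 1) else 0) = x ^ d / (1 - x ^ d) := by
  set f : ℕ → ℝ := fun i => if d ∣ i + 1 then x ^ (i + 1) else 0
  -- the multiples of `d` are the numbers `i + 1` with `i = d * k + (d - 1)`
  have hinj : Function.Injective fun k : ℕ => d * k + (d - 1) := fun a b hab => by
    simpa [hd.ne'] using hab
  have hsupp : Function.support f ⊆ Set.range fun k : ℕ => d * k + (d - 1) := fun i hi => by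
    obtain ⟨m, hm⟩ : d ∣ i + 1 := by by_contra h; exact hi (if_neg h)
    obtain ⟨k, rfl⟩ : ∃ k, m = k + 1 := Nat.exists_eq_succ_of_ne_zero (by rintro rfl; simp at hm)
    exact ⟨k, show d * k + (d - 1) = i by rw [mul_add] at hm; omega⟩
  have hterm (k : ℕ) : f (d * k + (d - 1)) = x ^ d * (x ^ d) ^ k := by
    have hk : d * k + (d - 1) + 1 = d * (k + 1) := by rw [mul_add]; omega
    simp only [f, hk, if_pos (dvd_mul_right d _), ← pow_mul, ← pow_add]
    ring_nf
  have hxd : x ^ d < 1 := pow_lt_one₀ hx₀ hx₁ hd.ne'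
  calc ∑' i, f i = ∑' k, f (d * k + (d - 1)) := (hinj.tsum_eq hsupp).symm
    _ = x ^ d / (1 - x ^ d) := by
      rw [tsum_congr hterm, tsum_mul_left, tsum_geometric_of_lt_one (by positivity) hxd,
        div_eq_mul_inv]

lemma tsum_dCount_mul_pow {x : ℝ} (hx₀ : 0 ≤ x) (hx₁ : x < 1) (t : ℕ) :
    (∑' i : ℕ, (dCount t (i + 1) : ℝ) * x ^ (i + 1)) = ∑ d ∈ Icc 1 t, x ^ d / (1 - x ^ d) := by
  have hterm : ∀ i : ℕ, (dCount t (i + 1) : ℝ) * x ^ (i + 1)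
      = ∑ d ∈ Icc 1 t, if d ∣ i + 1 then x ^ (i + 1) else 0 := by
    intro i
    rw [dCount_eq_card_filter_dvd t i.succ_ne_zero, natCast_card_filter, sum_mul]
    simp only [ite_mul, one_mul, zero_mul]
  rw [tsum_congr hterm, Summable.tsum_finsetSum fun d _ => summable_ite_dvd_pow hx₀ hx₁ d]
  exact sum_congr rfl fun d hd => tsum_ite_dvd_pow hx₀ hx₁ (mem_Icc.mp hd).1

lemma natCast_mul_pow_mul_one_sub_le {x : ℝ} (hx₀ : 0 ≤ x) (hx₁ : x ≤ 1) (d : ℕ) :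
    d * x ^ d * (1 - x) ≤ 1 - x ^ d := by
  have hsum : (d : ℝ) * x ^ d ≤ ∑ j ∈ range d, x ^ j := by
    calc (d : ℝ) * x ^ d = ∑ _j ∈ range d, x ^ d := by rw [sum_const, card_range, nsmul_eq_mul]
      _ ≤ ∑ j ∈ range d, x ^ j :=
        sum_le_sum fun j hj => pow_le_pow_of_le_one hx₀ hx₁ (mem_range.mp hj).le
  calc d * x ^ d * (1 - x) ≤ (∑ j ∈ range d, x ^ j) * (1 - x) :=
        mul_le_mul_of_nonneg_right hsum (by linarith)
    _ = 1 - x ^ d := by rw [mul_comm, mul_neg_geom_sum]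

lemma pow_div_one_sub_pow_le {x : ℝ} (hx₀ : 0 ≤ x) (hx₁ : x < 1) {d : ℕ} (hd : 0 < d) :
    x ^ d / (1 - x ^ d) ≤ 1 / ((1 - x) * d) := by
  have hxd : x ^ d < 1 := pow_lt_one₀ hx₀ hx₁ hd.ne'
  have hd' : (0 : ℝ) < d := Nat.cast_pos.mpr hd
  rw [div_le_div_iff₀ (by linarith) (by nlinarith)]
  linarith [natCast_mul_pow_mul_one_sub_le hx₀ hx₁.le d]

lemma sum_pow_div_one_sub_pow_le_harmonic {x : ℝ} (hx₀ : 0 ≤ x) (hx₁ : x < 1) (t : ℕ) :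
    ∑ d ∈ Icc 1 t, x ^ d / (1 - x ^ d) ≤ harmonic t / (1 - x) := by
  calc ∑ d ∈ Icc 1 t, x ^ d / (1 - x ^ d)
      ≤ ∑ d ∈ Icc 1 t, 1 / ((1 - x) * d) :=
        sum_le_sum fun d hd => pow_div_one_sub_pow_le hx₀ hx₁ (mem_Icc.mp hd).1
    _ = harmonic t / (1 - x) := by
        rw [harmonic_eq_sum_Icc, Rat.cast_sum, sum_div]
        refine sum_congr rfl fun d _ => ?_
        push_cast
        rw [one_div, mul_inv]
        ring

/-- There is a constant `C > 0` such that for every `p ∈ (0,1)` and every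
positive integer `t`, `Σ_{i=1}^∞ d_t(i)·(1−p)^i ≤ (log t + C)/p`. -/
theorem tsum_dCount_le :
    ∃ C : ℝ, 0 < C ∧ ∀ p : ℝ, 0 < p → p < 1 → ∀ t : ℕ, 0 < t →
      (∑' i : ℕ, (dCount t (i + 1) : ℝ) * (1 - p) ^ (i + 1)) ≤ (Real.log t + C) / p := by
  refine ⟨1, one_pos, fun p hp₀ hp₁ t _ => ?_⟩
  have hx₀ : 0 ≤ 1 - p := by linarith
  have hx₁ : 1 - p < 1 := by linarith
  calc (∑' i : ℕ, (dCount t (i + 1) : ℝ) * (1 - p) ^ (i + 1))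
      = ∑ d ∈ Icc 1 t, (1 - p) ^ d / (1 - (1 - p) ^ d) := tsum_dCount_mul_pow hx₀ hx₁ t
    _ ≤ harmonic t / p := by
        simpa only [sub_sub_cancel] using sum_pow_div_one_sub_pow_le_harmonic hx₀ hx₁ t
    _ ≤ (Real.log t + 1) / p := by
        gcongr
        linarith [harmonic_le_one_add_log t]
end

section
/- For every p ∈ (0,1) and every positive integer t, Σ_{k=1}^{t} p/(1 − (1−p)^k)^2 ≤ sqrt( (t/p) · Σ_{k=1}^{t} 1/(1 − (1−p)^k) ). (This follows from the Cauchy–Schwarz inequality together with the bound p^2/(1 − (1−p)^k)^3 ≤ 1/p, valid since 1 − (1−p)^k ≥ p for all k ≥ 1.) -/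
/-!
By Cauchy–Schwarz, `(∑ₖ aₖ)² ≤ t ∑ₖ aₖ²` with `aₖ = p / xₖ²` and `xₖ = 1 - (1 - p)ᵏ`.
Since `xₖ ≥ p` for `k ≥ 1`, each `aₖ² = p² / xₖ⁴` is at most `1 / (p xₖ)`.
-/

open Finset

lemma Finset.sum_le_sqrt_card_mul {ι : Type*} (s : Finset ι) (f : ι → ℝ) {B : ℝ}
    (h : ∑ i ∈ s, f i ^ 2 ≤ B) : ∑ i ∈ s, f i ≤ √(#s * B) :=
  Real.le_sqrt_of_sq_le <|
    (sq_sum_le_card_mul_sum_sq).trans (mul_le_mul_of_nonneg_left h (Nat.cast_nonneg _))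

lemma le_one_sub_one_sub_pow {p : ℝ} (hp0 : 0 ≤ p) (hp1 : p ≤ 1) {k : ℕ} (hk : k ≠ 0) :
    p ≤ 1 - (1 - p) ^ k := by
  have : (1 - p) ^ k ≤ 1 - p := pow_le_of_le_one (by linarith) (by linarith) hk
  linarith

lemma div_sq_sq_le_one_div_mul {p x : ℝ} (hp : 0 < p) (hpx : p ≤ x) :
    (p / x ^ 2) ^ 2 ≤ 1 / p * (1 / x) := by
  have hx : 0 < x := hp.trans_le hpx
  rw [div_pow, ← pow_mul, one_div_mul_one_div, div_le_div_iff₀ (by positivity) (by positivity)]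
  calc p ^ 2 * (p * x) = p ^ 3 * x := by ring
    _ ≤ x ^ 3 * x := by gcongr
    _ = 1 * x ^ (2 * 2) := by ring

theorem sum_var_le_sqrt_general (p : ℝ) (hp0 : 0 < p) (hp1 : p < 1) (t : ℕ) :
    (∑ k ∈ Finset.Icc 1 t, p / (1 - (1 - p) ^ k) ^ 2) ≤
      Real.sqrt ((t / p) * ∑ k ∈ Finset.Icc 1 t, 1 / (1 - (1 - p) ^ k)) := by
  have hsq : ∑ k ∈ Icc 1 t, (p / (1 - (1 - p) ^ k) ^ 2) ^ 2
      ≤ ∑ k ∈ Icc 1 t, 1 / p * (1 / (1 - (1 - p) ^ k)) :=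
    sum_le_sum fun k hk ↦ div_sq_sq_le_one_div_mul hp0 <|
      le_one_sub_one_sub_pow hp0.le hp1.le (by grind)
  calc (∑ k ∈ Icc 1 t, p / (1 - (1 - p) ^ k) ^ 2)
      ≤ √(#(Icc 1 t) * ∑ k ∈ Icc 1 t, 1 / p * (1 / (1 - (1 - p) ^ k))) :=
        sum_le_sqrt_card_mul _ _ hsq
    _ = √((t / p) * ∑ k ∈ Icc 1 t, 1 / (1 - (1 - p) ^ k)) := by
        rw [← mul_sum, Nat.card_Icc, Nat.add_sub_cancel]
        ring_nf

/-- For every `p ∈ (0,1)` and every positive integer `t`,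
`Σ_{k=1}^t p/(1 − (1−p)^k)² ≤ sqrt((t/p) · Σ_{k=1}^t 1/(1 − (1−p)^k))`. -/
theorem sum_var_le_sqrt (p : ℝ) (hp0 : 0 < p) (hp1 : p < 1) (t : ℕ) (ht : 0 < t) :
    (∑ k ∈ Finset.Icc 1 t, p / (1 - (1 - p) ^ k) ^ 2) ≤
      Real.sqrt ((t / p) * ∑ k ∈ Finset.Icc 1 t, 1 / (1 - (1 - p) ^ k)) :=
  sum_var_le_sqrt_general p hp0 hp1 t
end

section
/- In the infinite ordered directed random graph with edge probability p ∈ (0,1): almost surely, for every i ≥ 1 the i-th reachable vertex other than v_1 exists; moreover the increments X_i − X_{i−1} for i ≥ 1 are mutually independent, and X_i − X_{i−1} is geometrically distributed with success probability 1 − (1−p)^{i}, i.e. P(X_i − X_{i−1} = m) = (1 − (1−p)^{i})·(1−p)^{i·(m−1)} for every integer m ≥ 1. -/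
/-!
Reveal the edges column by column: once the reachable vertices below a vertex `v` are known,
`v` is reachable exactly when one of the edges from them into `v` is present, an event that
depends only on the edges into `v`; these events are therefore independent. Between `X_k` and
`X_{k+1}` exactly `k + 1` vertices are reachable below each column, so each column is a trial
with success probability `1 - (1 - p) ^ (k + 1)` and `X_{k+1} - X_k` is the waiting time for
the first success. Multiplying over the columns gives the law of every initial segment of
increments as a product of shifted geometric laws, and these finite-dimensional laws determine
the law of the whole sequence. Identifying the increments with waiting times needs the
reachable set to be infinite, which holds almost surely already through the edges out of `v_1`.
-/

open MeasureTheory ProbabilityTheory Filter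

/-- `IsInfOrderedRandomGraph μ edge p` says that, on the probability space `(Ω, μ)`, the
family `edge` of Boolean random variables models the infinite ordered directed random graph
with edge probability `p`: vertices are `0, 1, 2, …` (vertex `k` standing for `v_{k+1}`),
and for each pair `a < b` the indicator `edge a b` of the presence of the directed edge
from `a` to `b` takes the value `true` with probability `p`, these indicators (for the
pairs `a < b`) forming a mutually independent family. -/
structure IsInfOrderedRandomGraph {Ω : Type*} [MeasurableSpace Ω] (μ : Measure Ω)
    (edge : ℕ → ℕ → Ω → Bool) (p : ℝ) : Prop where
  isProb : IsProbabilityMeasure μ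
  meas : ∀ a b : ℕ, Measurable (edge a b)
  indep : iIndepFun
      (fun (e : {q : ℕ × ℕ // q.1 < q.2}) ω => edge e.1.1 e.1.2 ω) μ
  marginal : ∀ a b : ℕ, a < b → μ {ω | edge a b ω = true} = ENNReal.ofReal p

/-- Vertex `j` (i.e. `v_{j+1}`) is reachable from vertex `0` (i.e. `v_1`) by a directed
path along present edges with strictly increasing indices. -/
def ReachableI {Ω : Type*} (edge : ℕ → ℕ → Ω → Bool) (ω : Ω) (j : ℕ) : Prop :=
  Relation.ReflTransGen (fun a b => a < b ∧ edge a b ω = true) 0 j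

/-- `Xr edge ω i` is `X_i`: for `i ≥ 1`, the (1-based) index of the `i`-th reachable vertex
other than `v_1` (in increasing order of index), and `X_0 = 1` (the index of `v_1`).
Vertex `j` has 1-based index `j + 1`. -/
noncomputable def Xr {Ω : Type*} (edge : ℕ → ℕ → Ω → Bool) (ω : Ω) : ℕ → ℕ
  | 0 => 1
  | i + 1 => Nat.nth (fun j => 0 < j ∧ ReachableI edge ω j) i + 1

open Finset
open scoped ENNReal Classical

theorem Nat.forall_nth_eq_iff {P : ℕ → Prop} (hP : {j | P j}.Infinite) (hP0 : ¬P 0)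
    {b : ℕ → ℕ} (hb : StrictMono b) (hb0 : b 0 = 0) (n : ℕ) :
    (∀ i < n, nth P i = b (i + 1)) ↔ ∀ j ∈ Ioc 0 (b n), P j ↔ j ∈ Set.range b := by
  have hb_pos : ∀ {k}, 0 < b k → ∃ k', k = k' + 1 := fun {k} hk =>
    Nat.exists_eq_succ_of_ne_zero (by rintro rfl; omega)
  constructor
  · intro h j hj
    obtain ⟨hj0, hjn⟩ := mem_Ioc.1 hj
    obtain ⟨n, rfl⟩ := hb_pos (hj0.trans_le hjn)
    rw [← h n n.lt_succ_self] at hjn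
    constructor
    · intro hPj
      obtain ⟨t, rfl⟩ : j ∈ Set.range (nth P) := (Nat.range_nth_of_infinite hP).symm ▸ hPj
      exact ⟨t + 1, (h t (Nat.lt_succ_of_le ((Nat.nth_le_nth hP).1 hjn))).symm⟩
    · rintro ⟨k, rfl⟩
      obtain ⟨k, rfl⟩ := hb_pos hj0
      have hk : k < n + 1 := by
        rw [h n n.lt_succ_self, hb.le_iff_le] at hjn
        omega
      exact h k hk ▸ Nat.nth_mem_of_infinite hP k
  · intro h i
    induction i using Nat.strong_induction_on with
    | _ i ih =>
      intro hin
      -- `b (i + 1) = nth P t` with `t ≥ i`, so `nth P i ≤ b (i + 1)` is some `b (k + 1)` with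
      -- `k ≤ i`, and `k < i` would make `nth P` take the value `b (k + 1)` twice.
      have hb_mem : b (i + 1) ∈ Ioc 0 (b n) :=
        mem_Ioc.2 ⟨hb0 ▸ hb i.succ_pos, hb.monotone hin⟩
      obtain ⟨t, ht⟩ : b (i + 1) ∈ Set.range (nth P) :=
        (Nat.range_nth_of_infinite hP).symm ▸ (h _ hb_mem).2 ⟨_, rfl⟩
      have hit : i ≤ t := by
        by_contra! hti
        rw [ih t hti (hti.trans hin)] at ht
        exact absurd (hb.injective ht) (by omega)
      have hle : nth P i ≤ b (i + 1) := ht ▸ Nat.nth_monotone hP hit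
      have hP_nth : P (nth P i) := Nat.nth_mem_of_infinite hP i
      have h_nth_pos : 0 < nth P i := Nat.pos_of_ne_zero fun h0 => hP0 (h0 ▸ hP_nth)
      obtain ⟨k, hk⟩ :=
        (h _ (mem_Ioc.2 ⟨h_nth_pos, hle.trans (hb.monotone hin)⟩)).1 hP_nth
      obtain ⟨k, rfl⟩ := hb_pos (hk ▸ h_nth_pos)
      have hki : k ≤ i := by
        rw [← hk, hb.le_iff_le] at hle
        omega
      rcases hki.lt_or_eq with hki | rfl
      · rw [← ih k hki (hki.trans hin)] at hk
        exact absurd (Nat.nth_injective hP hk) hki.ne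
      · exact hk.symm

theorem StrictMono.mem_range_iff_of_mem_Ioc {b : ℕ → ℕ} (hb : StrictMono b) {j k : ℕ}
    (hj : j ∈ Ioc (b k) (b (k + 1))) : j ∈ Set.range b ↔ j = b (k + 1) := by
  obtain ⟨hkj, hjk⟩ := mem_Ioc.1 hj
  refine ⟨?_, fun h => ⟨_, h.symm⟩⟩
  rintro ⟨l, rfl⟩
  rw [hb.lt_iff_lt] at hkj
  rw [hb.le_iff_le] at hjk
  rw [show l = k + 1 by omega]

theorem StrictMono.card_filter_range_mem_range_of_mem_Ioc {b : ℕ → ℕ} (hb : StrictMono b)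
    {j k : ℕ} (hj : j ∈ Ioc (b k) (b (k + 1))) :
    #{a ∈ range j | a ∈ Set.range b} = k + 1 := by
  obtain ⟨hkj, hjk⟩ := mem_Ioc.1 hj
  have : {a ∈ range j | a ∈ Set.range b} = (range (k + 1)).image b := by
    ext a
    simp only [mem_filter, mem_range, mem_image]
    constructor
    · rintro ⟨haj, l, rfl⟩
      exact ⟨l, hb.lt_iff_lt.1 (haj.trans_le hjk), rfl⟩
    · rintro ⟨l, hl, rfl⟩
      exact ⟨(hb.monotone (Nat.le_of_lt_succ hl)).trans_lt hkj, l, rfl⟩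
  rw [this, card_image_of_injective _ hb.injective, card_range]

theorem Finset.prod_Ioc_eq_prod_range_prod_Ioc {M : Type*} [CommMonoid M] {b : ℕ → ℕ}
    (hb : Monotone b) (f : ℕ → M) (n : ℕ) :
    ∏ j ∈ Ioc (b 0) (b n), f j = ∏ k ∈ range n, ∏ j ∈ Ioc (b k) (b (k + 1)), f j := by
  induction n with
  | zero => simp
  | succ n ih =>
    rw [prod_range_succ, ← ih, prod_Ioc_consecutive _ (hb (Nat.zero_le n)) (hb n.le_succ)]

theorem Finset.prod_Ioc_ite_eq_top {M : Type*} [CommMonoid M] (a m : ℕ) (x y : M) :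
    ∏ j ∈ Ioc a (a + (m + 1)), (if j = a + (m + 1) then x else y) = y ^ m * x := by
  rw [← add_assoc, prod_Ioc_succ_top (by omega), if_pos rfl,
    prod_congr rfl fun j hj => if_neg (by simp at hj; omega), prod_const, Nat.card_Ioc,
    Nat.add_sub_cancel_left]

def arrivals (m : ℕ → ℕ) : ℕ → ℕ
  | 0 => 0
  | k + 1 => arrivals m k + (m k + 1)

theorem arrivals_strictMono (m : ℕ → ℕ) : StrictMono (arrivals m) :=
  strictMono_nat_of_lt_succ fun k => by simp [arrivals]

section Measurability

variable {Ω : Type*} [MeasurableSpace Ω]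

theorem measurable_nat_count {P : Ω → ℕ → Prop} (hP : ∀ j, MeasurableSet {ω | P ω j})
    (n : ℕ) : Measurable fun ω => Nat.count (P ω) n := by
  induction n with
  | zero => simp
  | succ n ih =>
    simp_rw [Nat.count_succ]
    exact ih.add (Measurable.ite (hP n) measurable_const measurable_const)

theorem measurable_nat_nth {P : Ω → ℕ → Prop} (hP : ∀ j, MeasurableSet {ω | P ω j})
    (i : ℕ) : Measurable fun ω => Nat.nth (P ω) i := by
  -- A nonzero value `v` is taken exactly when `P ω v` and `v` has `i` predecessors in `P ω`.
  have h_succ : ∀ v, MeasurableSet {ω | Nat.nth (P ω) i = v + 1} := fun v => by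
    have : {ω | Nat.nth (P ω) i = v + 1} =
        {ω | P ω (v + 1)} ∩ {ω | Nat.count (P ω) (v + 1) = i} := by
      ext ω
      refine ⟨fun (h : Nat.nth (P ω) i = v + 1) => ?_,
        fun ⟨hv, hc⟩ => hc ▸ Nat.nth_count hv⟩
      have hne : Nat.nth (P ω) i ≠ 0 := by omega
      exact ⟨h ▸ Nat.nth_mem_of_ne_zero hne,
        h ▸ Nat.count_nth (Nat.lt_card_toFinset_of_nth_ne_zero hne)⟩
    rw [this]
    exact (hP _).inter (measurable_nat_count hP _ (measurableSet_singleton i))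
  refine measurable_to_countable' fun v => ?_
  rcases v with _ | v
  · have : (fun ω => Nat.nth (P ω) i) ⁻¹' {0} =
        (⋃ v, {ω | Nat.nth (P ω) i = v + 1})ᶜ := by
      ext ω
      simp only [Set.mem_preimage, Set.mem_singleton_iff, Set.mem_compl_iff, Set.mem_iUnion,
        not_exists]
      refine ⟨fun h v (hv : Nat.nth (P ω) i = v + 1) => by omega,
        fun h => by_contra fun _ => ?_⟩
      exact h (Nat.nth (P ω) i - 1) (show Nat.nth (P ω) i = _ - 1 + 1 by omega)
    rw [this]
    exact (MeasurableSet.iUnion h_succ).compl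
  · exact h_succ v

end Measurability

theorem ProbabilityTheory.iIndep.measure_biInter_eq_prod_of_pairwiseDisjoint
    {Ω ι κ : Type*} {mΩ : MeasurableSpace Ω} {μ : Measure Ω} {m : ι → MeasurableSpace Ω}
    (h_le : ∀ i, m i ≤ mΩ) (h : iIndep m μ) {S : κ → Set ι} {E : κ → Set Ω}
    (J : Finset κ) (hS : (J : Set κ).PairwiseDisjoint S)
    (hE : ∀ k ∈ J, MeasurableSet[⨆ i ∈ S k, m i] (E k)) :
    μ (⋂ k ∈ J, E k) = ∏ k ∈ J, μ (E k) := by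
  have := h.isProbabilityMeasure
  induction J using Finset.induction_on with
  | empty => simp
  | insert k J hk ih =>
    rw [set_biInter_insert, prod_insert hk,
      ← ih (hS.subset (subset_insert k J)) fun l hl => hE l (mem_insert_of_mem hl)]
    have hindep : Indep (⨆ i ∈ S k, m i) (⨆ i ∈ ⋃ l ∈ J, S l, m i) μ :=
      indep_iSup_of_disjoint h_le h <| Set.disjoint_iUnion₂_right.2 fun l hl =>
        hS (mem_insert_self k J) (mem_insert_of_mem hl) (ne_of_mem_of_not_mem hl hk).symm
    refine (Indep_iff _ _ μ).1 hindep _ _ (hE k (mem_insert_self k J)) ?_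
    refine .biInter J.countable_toSet fun l hl => ?_
    have hle : ⨆ i ∈ S l, m i ≤ ⨆ i ∈ ⋃ l ∈ J, S l, m i :=
      biSup_mono fun i hi => Set.mem_biUnion hl hi
    exact hle _ (hE l (mem_insert_of_mem hl))

section IncrementLaw

open unitInterval

-- `q` is the probability that an edge is absent.
noncomputable def incrementLaw (q : unitInterval) (k : ℕ) : Measure ℕ :=
  (geometricMeasure (σ (q ^ (k + 1)))).map (· + 1)

instance (q : unitInterval) (k : ℕ) : IsProbabilityMeasure (incrementLaw q k) :=
  Measure.isProbabilityMeasure_map (measurable_add_const 1).aemeasurable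

theorem incrementLaw_singleton_zero (q : unitInterval) (k : ℕ) : incrementLaw q k {0} = 0 := by
  rw [incrementLaw, Measure.map_apply (measurable_add_const 1) (measurableSet_singleton 0)]
  convert measure_empty (μ := geometricMeasure _)
  ext x
  simp

theorem incrementLaw_singleton_succ {q : unitInterval} (hq : q ≠ 1) (k m : ℕ) :
    incrementLaw q k {m + 1} =
      ENNReal.ofReal (((q : ℝ) ^ (k + 1)) ^ m * (1 - (q : ℝ) ^ (k + 1))) := by
  have hσ : σ (q ^ (k + 1)) ≠ 0 := by simp [symm_eq_zero, pow_eq_one_iff, hq]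
  have hpre : (· + 1) ⁻¹' {m + 1} = ({m} : Set ℕ) := by ext x; simp
  rw [incrementLaw, Measure.map_apply (measurable_add_const 1) (measurableSet_singleton _), hpre,
    geometricMeasure_singleton hσ, coe_symm_eq, Set.Icc.coe_pow, sub_sub_cancel]

end IncrementLaw

section Reachability

variable {Ω : Type*} {edge : ℕ → ℕ → Ω → Bool} {ω : Ω}

theorem reachableI_zero : ReachableI edge ω 0 := Relation.ReflTransGen.refl

theorem reachableI_iff {j : ℕ} :
    ReachableI edge ω j ↔ j = 0 ∨ ∃ a < j, ReachableI edge ω a ∧ edge a j ω = true := by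
  refine ⟨fun h => ?_, ?_⟩
  · rcases Relation.ReflTransGen.cases_tail h with h0 | ⟨a, ha, hlt, he⟩
    · exact .inl h0
    · exact .inr ⟨a, hlt, ha, he⟩
  · rintro (rfl | ⟨a, hlt, ha, he⟩)
    · exact reachableI_zero
    · exact ha.tail ⟨hlt, he⟩

theorem reachableI_iff_of_forall_lt {A : Set ℕ} {j : ℕ} (hj : 0 < j)
    (h : ∀ a < j, ReachableI edge ω a ↔ a ∈ A) :
    ReachableI edge ω j ↔ ∃ a < j, a ∈ A ∧ edge a j ω = true := by
  rw [reachableI_iff, or_iff_right hj.ne']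
  exact exists_congr fun a => and_congr_right fun ha => and_congr_left' (h a ha)

theorem forall_reachableI_iff_mem_iff {A : Set ℕ} (hA : 0 ∈ A) (J : ℕ) :
    (∀ j ∈ Ioc 0 J, ReachableI edge ω j ↔ j ∈ A) ↔
      ∀ j ∈ Ioc 0 J, (∃ a < j, a ∈ A ∧ edge a j ω = true) ↔ j ∈ A := by
  constructor
  · intro h j hj
    obtain ⟨hj0, hjJ⟩ := mem_Ioc.1 hj
    rw [← reachableI_iff_of_forall_lt hj0 fun a ha => ?_]
    · exact h j hj
    rcases Nat.eq_zero_or_pos a with rfl | ha0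
    · exact iff_of_true reachableI_zero hA
    · exact h a (mem_Ioc.2 ⟨ha0, by omega⟩)
  · intro h j
    induction j using Nat.strong_induction_on with
    | _ j ih =>
      intro hj
      obtain ⟨hj0, hjJ⟩ := mem_Ioc.1 hj
      rw [reachableI_iff_of_forall_lt hj0 fun a ha => ?_]
      · exact h j hj
      rcases Nat.eq_zero_or_pos a with rfl | ha0
      · exact iff_of_true reachableI_zero hA
      · exact ih a ha (mem_Ioc.2 ⟨ha0, by omega⟩)

theorem Xr_lt_Xr_succ (hinf : {j | 0 < j ∧ ReachableI edge ω j}.Infinite) (i : ℕ) :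
    Xr edge ω i < Xr edge ω (i + 1) := by
  rcases i with _ | i
  · exact Nat.succ_lt_succ (Nat.nth_mem_of_infinite hinf 0).1
  · exact Nat.succ_lt_succ ((Nat.nth_lt_nth hinf).2 i.lt_succ_self)

theorem forall_Xr_sub_eq_iff (hinf : {j | 0 < j ∧ ReachableI edge ω j}.Infinite)
    (m : ℕ → ℕ) (n : ℕ) :
    (∀ i < n, Xr edge ω (i + 1) - Xr edge ω i = m i + 1) ↔
      ∀ i < n, Nat.nth (fun j => 0 < j ∧ ReachableI edge ω j) i = arrivals m (i + 1) := by
  induction n with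
  | zero => simp
  | succ n ih =>
    simp only [Nat.forall_lt_succ_right, ih]
    refine and_congr_right fun h => ?_
    have hXn : Xr edge ω n = arrivals m n + 1 := by
      rcases n with _ | n
      · rfl
      · exact congrArg (· + 1) (h n n.lt_succ_self)
    have hXn_succ : Xr edge ω (n + 1) =
        Nat.nth (fun j => 0 < j ∧ ReachableI edge ω j) n + 1 := rfl
    have harr : arrivals m (n + 1) = arrivals m n + (m n + 1) := rfl
    have := Xr_lt_Xr_succ hinf n
    omega

theorem forall_Xr_sub_eq_iff_forall_mem_Ioc
    (hinf : {j | 0 < j ∧ ReachableI edge ω j}.Infinite) (m : ℕ → ℕ) (n : ℕ) :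
    (∀ i < n, Xr edge ω (i + 1) - Xr edge ω i = m i + 1) ↔
      ∀ j ∈ Ioc 0 (arrivals m n),
        (∃ a < j, a ∈ Set.range (arrivals m) ∧ edge a j ω = true) ↔
          j ∈ Set.range (arrivals m) := by
  rw [forall_Xr_sub_eq_iff hinf, Nat.forall_nth_eq_iff hinf (fun h => h.1.false)
    (arrivals_strictMono m) rfl,
    ← forall_reachableI_iff_mem_iff (A := Set.range (arrivals m)) ⟨0, rfl⟩]
  exact forall₂_congr fun j hj => by rw [and_iff_right (mem_Ioc.1 hj).1]

def columnEvent (edge : ℕ → ℕ → Ω → Bool) (A : Set ℕ) (j : ℕ) : Set Ω :=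
  {ω | (∃ a < j, a ∈ A ∧ edge a j ω = true) ↔ j ∈ A}

theorem columnEvent_eq (edge : ℕ → ℕ → Ω → Bool) (A : Set ℕ) (j : ℕ) :
    columnEvent edge A j =
      if j ∈ A then (⋂ a ∈ {a ∈ range j | a ∈ A}, {ω | edge a j ω = false})ᶜ
      else ⋂ a ∈ {a ∈ range j | a ∈ A}, {ω | edge a j ω = false} := by
  ext ω
  split_ifs with hj <;> simp [columnEvent, hj, and_assoc]

theorem measurableSet_columnEvent (edge : ℕ → ℕ → Ω → Bool) (A : Set ℕ) (j : ℕ) :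
    MeasurableSet[⨆ e ∈ {e : {q : ℕ × ℕ // q.1 < q.2} | e.1.2 = j},
      MeasurableSpace.comap (edge e.1.1 e.1.2) inferInstance] (columnEvent edge A j) := by
  have hN : MeasurableSet[⨆ e ∈ {e : {q : ℕ × ℕ // q.1 < q.2} | e.1.2 = j},
      MeasurableSpace.comap (edge e.1.1 e.1.2) inferInstance]
      (⋂ a ∈ {a ∈ range j | a ∈ A}, {ω | edge a j ω = false}) := by
    refine .biInter (countable_toSet _) fun a ha => ?_
    have hle := le_iSup₂ (f := fun (e : {q : ℕ × ℕ // q.1 < q.2}) (_ : e.1.2 = j) =>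
      MeasurableSpace.comap (edge e.1.1 e.1.2) inferInstance)
      ⟨(a, j), mem_range.1 (mem_filter.1 ha).1⟩ rfl
    exact hle _ ⟨{false}, measurableSet_singleton false, rfl⟩
  rw [columnEvent_eq]
  split_ifs
  exacts [hN.compl, hN]

end Reachability

namespace IsInfOrderedRandomGraph

variable {Ω : Type*} [MeasurableSpace Ω] {μ : Measure Ω} {edge : ℕ → ℕ → Ω → Bool}
  {p : ℝ}

theorem measurableSet_reachableI (hG : IsInfOrderedRandomGraph μ edge p) (j : ℕ) :
    MeasurableSet {ω | ReachableI edge ω j} := by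
  induction j using Nat.strong_induction_on with
  | _ j ih =>
    have : {ω | ReachableI edge ω j} = {ω | j = 0} ∪
        ⋃ a, ⋃ (_ : a < j), {ω | ReachableI edge ω a} ∩ {ω | edge a j ω = true} := by
      ext ω
      simp only [Set.mem_union, Set.mem_iUnion, Set.mem_inter_iff, exists_prop]
      exact reachableI_iff
    rw [this]
    exact (MeasurableSet.const _).union <| .iUnion fun a => .iUnion fun ha =>
      (ih a ha).inter (hG.meas a j (measurableSet_singleton true))

theorem measurable_Xr (hG : IsInfOrderedRandomGraph μ edge p) (i : ℕ) :
    Measurable fun ω => Xr edge ω i := by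
  rcases i with _ | i
  · exact measurable_const
  · exact (measurable_nat_nth (fun j => (MeasurableSet.const (0 < j)).inter
      (hG.measurableSet_reachableI j)) i).add_const 1

theorem measurable_increment (hG : IsInfOrderedRandomGraph μ edge p) (i : ℕ) :
    Measurable fun ω => Xr edge ω (i + 1) - Xr edge ω i :=
  (hG.measurable_Xr (i + 1)).sub (hG.measurable_Xr i)

-- Second Borel–Cantelli lemma for the edges out of `v_1`.
theorem ae_infinite_reachableI (hG : IsInfOrderedRandomGraph μ edge p) (hp0 : 0 < p) :
    ∀ᵐ ω ∂μ, {j | 0 < j ∧ ReachableI edge ω j}.Infinite := by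
  have := hG.isProb
  set s : ℕ → Set Ω := fun n => {ω | edge 0 (n + 1) ω = true}
  have hs : ∀ n, MeasurableSet (s n) := fun n =>
    hG.meas 0 (n + 1) (measurableSet_singleton true)
  have hs_indep : iIndepSet s μ := by
    rw [iIndepSet_iff_meas_biInter hs]
    intro t
    refine (hG.indep.precomp (g := fun n : ℕ =>
        (⟨(0, n + 1), n.succ_pos⟩ : {q : ℕ × ℕ // q.1 < q.2}))
      fun a b h => by simpa using congrArg (·.1.2) h).measure_inter_preimage_eq_mul t
      (sets := fun _ => {true}) fun _ _ => measurableSet_singleton true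
  have hs_sum : ∑' n, μ (s n) = ∞ := by
    simp_rw [s, hG.marginal 0 _ (Nat.succ_pos _)]
    exact ENNReal.tsum_const_eq_top_of_ne_zero (ENNReal.ofReal_pos.2 hp0).ne'
  have h_limsup : ∀ᵐ ω ∂μ, ω ∈ limsup s atTop := by
    rw [ae_iff]
    exact (prob_compl_eq_zero_iff (MeasurableSet.measurableSet_limsup hs)).2
      (measure_limsup_eq_one hs hs_indep hs_sum)
  filter_upwards [h_limsup] with ω hω
  rw [mem_limsup_iff_frequently_mem, Nat.frequently_atTop_iff_infinite] at hω
  refine (hω.image Nat.succ_injective.injOn).mono ?_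
  rintro _ ⟨n, hn, rfl⟩
  exact ⟨n.succ_pos, Relation.ReflTransGen.single ⟨n.succ_pos, hn⟩⟩

theorem measure_edge_eq_false (hG : IsInfOrderedRandomGraph μ edge p) (hp0 : 0 ≤ p)
    {a b : ℕ} (hab : a < b) : μ {ω | edge a b ω = false} = ENNReal.ofReal (1 - p) := by
  have := hG.isProb
  have hc : {ω | edge a b ω = false} = {ω | edge a b ω = true}ᶜ := by ext; simp
  have hm : MeasurableSet {ω | edge a b ω = true} := hG.meas a b (measurableSet_singleton true)
  rw [hc, prob_compl_eq_one_sub hm, hG.marginal a b hab, ENNReal.ofReal_sub 1 hp0,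
    ENNReal.ofReal_one]

theorem measure_biInter_edge_eq_false (hG : IsInfOrderedRandomGraph μ edge p) (hp0 : 0 ≤ p)
    (hp1 : p ≤ 1) {j : ℕ} (T : Finset ℕ) (hT : ∀ a ∈ T, a < j) :
    μ (⋂ a ∈ T, {ω | edge a j ω = false}) = ENNReal.ofReal ((1 - p) ^ #T) := by
  have hcol : iIndepFun (fun (a : {a // a < j}) ω => edge a j ω) μ :=
    hG.indep.precomp (g := fun a => (⟨(a.1, j), a.2⟩ : {q : ℕ × ℕ // q.1 < q.2}))
      fun a b h => Subtype.ext (congrArg (·.1.1) h)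
  have h := hcol.measure_inter_preimage_eq_mul (T.subtype (· < j)) (sets := fun _ => {false})
    fun _ _ => measurableSet_singleton false
  have hT' : #(T.subtype (· < j)) = #T := by rw [card_subtype, filter_true_of_mem hT]
  calc μ (⋂ a ∈ T, {ω | edge a j ω = false})
      = μ (⋂ a ∈ T.subtype (· < j), (fun ω => edge a j ω) ⁻¹' {false}) := by
        congr 1
        ext ω
        simp only [Set.mem_iInter, mem_subtype, Set.mem_preimage, Set.mem_singleton_iff,
          Subtype.forall]
        exact ⟨fun h a _ ha => h a ha, fun h a ha => h a (hT a ha) ha⟩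
    _ = ∏ a ∈ T.subtype (· < j), ENNReal.ofReal (1 - p) :=
        h.trans (prod_congr rfl fun a _ => hG.measure_edge_eq_false hp0 a.2)
    _ = ENNReal.ofReal ((1 - p) ^ #T) := by
        rw [prod_const, hT', ENNReal.ofReal_pow (by linarith)]

theorem measure_columnEvent (hG : IsInfOrderedRandomGraph μ edge p) (hp0 : 0 ≤ p)
    (hp1 : p ≤ 1) (A : Set ℕ) (j : ℕ) :
    μ (columnEvent edge A j) = ENNReal.ofReal
      (if j ∈ A then 1 - (1 - p) ^ #{a ∈ range j | a ∈ A}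
        else (1 - p) ^ #{a ∈ range j | a ∈ A}) := by
  have := hG.isProb
  have hT : ∀ a ∈ {a ∈ range j | a ∈ A}, a < j := fun a ha =>
    mem_range.1 (mem_filter.1 ha).1
  have hm : MeasurableSet (⋂ a ∈ {a ∈ range j | a ∈ A}, {ω | edge a j ω = false}) :=
    .biInter (countable_toSet _) fun a _ => hG.meas a j (measurableSet_singleton false)
  rw [columnEvent_eq]
  split_ifs
  · rw [prob_compl_eq_one_sub hm, hG.measure_biInter_edge_eq_false hp0 hp1 _ hT,
      ENNReal.ofReal_sub 1 (by positivity), ENNReal.ofReal_one]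
  · exact hG.measure_biInter_edge_eq_false hp0 hp1 _ hT

theorem measure_biInter_columnEvent (hG : IsInfOrderedRandomGraph μ edge p) (A : Set ℕ)
    (J : Finset ℕ) :
    μ (⋂ j ∈ J, columnEvent edge A j) = ∏ j ∈ J, μ (columnEvent edge A j) :=
  ((iIndepFun_iff_iIndep _ _ μ).1 hG.indep).measure_biInter_eq_prod_of_pairwiseDisjoint
    (m := fun e => MeasurableSpace.comap (edge e.1.1 e.1.2) inferInstance)
    (S := fun j => {e : {q : ℕ × ℕ // q.1 < q.2} | e.1.2 = j})
    (fun e => (hG.meas e.1.1 e.1.2).comap_le) J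
    (fun j _ k _ hjk => Set.disjoint_left.2 fun e hj hk => hjk (hj.symm.trans hk))
    fun j _ => by exact measurableSet_columnEvent edge A j

theorem prod_measure_columnEvent_Ioc_arrivals (hG : IsInfOrderedRandomGraph μ edge p)
    (hp0 : 0 ≤ p) (hp1 : p ≤ 1) (m : ℕ → ℕ) (k : ℕ) :
    ∏ j ∈ Ioc (arrivals m k) (arrivals m (k + 1)),
      μ (columnEvent edge (Set.range (arrivals m)) j) =
      ENNReal.ofReal (((1 - p) ^ (k + 1)) ^ m k * (1 - (1 - p) ^ (k + 1))) := by
  have hcol : ∀ j ∈ Ioc (arrivals m k) (arrivals m (k + 1)),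
      μ (columnEvent edge (Set.range (arrivals m)) j) =
        if j = arrivals m (k + 1) then ENNReal.ofReal (1 - (1 - p) ^ (k + 1))
        else ENNReal.ofReal ((1 - p) ^ (k + 1)) := fun j hj => by
    rw [hG.measure_columnEvent hp0 hp1,
      (arrivals_strictMono m).card_filter_range_mem_range_of_mem_Ioc hj]
    simp only [(arrivals_strictMono m).mem_range_iff_of_mem_Ioc hj]
    split_ifs <;> rfl
  rw [prod_congr rfl hcol, show arrivals m (k + 1) = arrivals m k + (m k + 1) from rfl,
    prod_Ioc_ite_eq_top, ENNReal.ofReal_mul (by positivity),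
    ENNReal.ofReal_pow (by positivity : (0 : ℝ) ≤ (1 - p) ^ (k + 1))]

theorem measure_forall_Xr_sub_eq (hG : IsInfOrderedRandomGraph μ edge p) (hp0 : 0 < p)
    {q : unitInterval} (hq : (q : ℝ) = 1 - p) (m : ℕ → ℕ) (n : ℕ) :
    μ {ω | ∀ i < n, Xr edge ω (i + 1) - Xr edge ω i = m i + 1} =
      ∏ k ∈ range n, incrementLaw q k {m k + 1} := by
  have hp1 : p ≤ 1 := by linarith [q.2.1]
  have hq1 : q ≠ 1 := fun h => by simp [h] at hq; linarith
  calc μ {ω | ∀ i < n, Xr edge ω (i + 1) - Xr edge ω i = m i + 1}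
      = μ (⋂ j ∈ Ioc 0 (arrivals m n), columnEvent edge (Set.range (arrivals m)) j) := by
        refine measure_congr (eventuallyEq_set.2 ?_)
        filter_upwards [hG.ae_infinite_reachableI hp0] with ω hω
        simp only [Set.mem_iInter]
        exact forall_Xr_sub_eq_iff_forall_mem_Ioc hω m n
    _ = ∏ k ∈ range n, ∏ j ∈ Ioc (arrivals m k) (arrivals m (k + 1)),
          μ (columnEvent edge (Set.range (arrivals m)) j) := by
        rw [hG.measure_biInter_columnEvent]
        exact prod_Ioc_eq_prod_range_prod_Ioc (arrivals_strictMono m).monotone _ n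
    _ = ∏ k ∈ range n, incrementLaw q k {m k + 1} := by
        refine prod_congr rfl fun k _ => ?_
        rw [hG.prod_measure_columnEvent_Ioc_arrivals hp0.le hp1,
          incrementLaw_singleton_succ hq1, hq]

theorem measure_increment_eq_zero (hG : IsInfOrderedRandomGraph μ edge p) (hp0 : 0 < p)
    (i : ℕ) : μ {ω | Xr edge ω (i + 1) - Xr edge ω i = 0} = 0 := by
  rw [measure_eq_zero_iff_ae_notMem]
  filter_upwards [hG.ae_infinite_reachableI hp0] with ω hω
  have := Xr_lt_Xr_succ hω i
  exact fun h : Xr edge ω (i + 1) - Xr edge ω i = 0 => by omega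

theorem measure_forall_increment_eq (hG : IsInfOrderedRandomGraph μ edge p) (hp0 : 0 < p)
    {q : unitInterval} (hq : (q : ℝ) = 1 - p) (x : ℕ → ℕ) (n : ℕ) :
    μ {ω | ∀ i < n, Xr edge ω (i + 1) - Xr edge ω i = x i} =
      ∏ k ∈ range n, incrementLaw q k {x k} := by
  by_cases hx : ∃ k < n, x k = 0
  · obtain ⟨k, hk, hxk⟩ := hx
    rw [prod_eq_zero (mem_range.2 hk) (hxk ▸ incrementLaw_singleton_zero q k)]
    exact measure_mono_null (fun ω hω => (hω k hk).trans hxk)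
      (hG.measure_increment_eq_zero hp0 k)
  · simp only [not_exists, not_and] at hx
    have hx' : ∀ k < n, x k = (x k - 1) + 1 := fun k hk => by have := hx k hk; omega
    have hset : {ω | ∀ i < n, Xr edge ω (i + 1) - Xr edge ω i = x i} =
        {ω | ∀ i < n, Xr edge ω (i + 1) - Xr edge ω i = (x i - 1) + 1} := by
      ext ω
      exact forall₂_congr fun i hi => by rw [← hx' i hi]
    rw [hset, hG.measure_forall_Xr_sub_eq hp0 hq]
    exact prod_congr rfl fun k hk => by rw [← hx' k (mem_range.1 hk)]

theorem map_increments_eq_infinitePi (hG : IsInfOrderedRandomGraph μ edge p) (hp0 : 0 < p)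
    {q : unitInterval} (hq : (q : ℝ) = 1 - p) :
    μ.map (fun ω i => Xr edge ω (i + 1) - Xr edge ω i) =
      Measure.infinitePi (incrementLaw q) := by
  have := hG.isProb
  set D := fun ω i => Xr edge ω (i + 1) - Xr edge ω i
  have hD : Measurable D := measurable_pi_iff.2 hG.measurable_increment
  have h_range : ∀ n, (μ.map D).map (range n).restrict =
      Measure.pi fun i : range n => incrementLaw q i := fun n => by
    refine Measure.ext_of_singleton fun x => ?_
    set x' : ℕ → ℕ := fun i => if h : i ∈ range n then x ⟨i, h⟩ else 0
    have hset : (range n).restrict ∘ D ⁻¹' {x} =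
        {ω | ∀ i < n, Xr edge ω (i + 1) - Xr edge ω i = x' i} := by
      ext ω
      simp only [Set.mem_preimage, Function.comp_apply, Set.mem_singleton_iff, funext_iff,
        restrict, Subtype.forall, mem_range, Set.mem_ofPred_eq, D, x']
      exact forall₂_congr fun a ha => by rw [dif_pos ha]
    rw [Measure.map_map (measurable_restrict _) hD,
      Measure.map_apply ((measurable_restrict _).comp hD) (measurableSet_singleton x),
      Measure.pi_singleton, hset, hG.measure_forall_increment_eq hp0 hq, ← prod_coe_sort]
    exact prod_congr rfl fun i _ => by simp [x', mem_range.1 i.2]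
  refine IsProjectiveLimit.unique (fun I => ?_)
    (Measure.isProjectiveLimit_infinitePi (incrementLaw q))
  rw [← restrict₂_comp_restrict I.subset_range_sup_succ,
    ← Measure.map_map (measurable_restrict₂ _) (measurable_restrict _), h_range]
  exact (isProjectiveMeasureFamily_pi _ _ _ _).symm

theorem map_increment_eq_incrementLaw (hG : IsInfOrderedRandomGraph μ edge p) (hp0 : 0 < p)
    {q : unitInterval} (hq : (q : ℝ) = 1 - p) (i : ℕ) :
    μ.map (fun ω => Xr edge ω (i + 1) - Xr edge ω i) = incrementLaw q i := by
  rw [← Measure.infinitePi_map_eval (incrementLaw q) i,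
    ← hG.map_increments_eq_infinitePi hp0 hq,
    Measure.map_map (measurable_pi_apply i) (measurable_pi_iff.2 hG.measurable_increment)]
  rfl

end IsInfOrderedRandomGraph

/-- In the infinite ordered directed random graph with edge probability
`p ∈ (0,1)`: almost surely every `i`-th reachable vertex other than `v_1` exists (i.e. the
set of reachable vertices other than `v_1` is infinite); the increments `X_i − X_{i−1}`
(`i ≥ 1`) are mutually independent; and `X_i − X_{i−1}` is geometric with success
probability `1 − (1−p)^i`, i.e. `P(X_i − X_{i−1} = m) = (1 − (1−p)^i)·(1−p)^{i(m−1)}` for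
every integer `m ≥ 1`. -/
theorem increments_indep_geometric {Ω : Type*} [MeasurableSpace Ω] (μ : Measure Ω)
    (edge : ℕ → ℕ → Ω → Bool) (p : ℝ) (hp0 : 0 < p) (hp1 : p < 1)
    (hG : IsInfOrderedRandomGraph μ edge p) :
    μ {ω | {j : ℕ | 0 < j ∧ ReachableI edge ω j}.Infinite} = 1 ∧
    iIndepFun
      (fun (i : ℕ) ω => Xr edge ω (i + 1) - Xr edge ω i) μ ∧
    (∀ i : ℕ, 1 ≤ i → ∀ m : ℕ, 1 ≤ m →
      μ {ω | Xr edge ω i - Xr edge ω (i - 1) = m} =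
        ENNReal.ofReal ((1 - (1 - p) ^ i) * (1 - p) ^ (i * (m - 1)))) := by
  have := hG.isProb
  let q : unitInterval := ⟨1 - p, by linarith, by linarith⟩
  have hq : (q : ℝ) = 1 - p := rfl
  refine ⟨?_, ?_, fun i hi m hm => ?_⟩
  · exact (measure_congr (ae_eq_univ.2 (ae_iff.1 (hG.ae_infinite_reachableI hp0)))).trans
      measure_univ
  · rw [iIndepFun_iff_map_fun_eq_infinitePi_map hG.measurable_increment,
      hG.map_increments_eq_infinitePi hp0 hq]
    simp_rw [hG.map_increment_eq_incrementLaw hp0 hq]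
  · obtain ⟨k, rfl⟩ := Nat.exists_eq_add_of_le' hi
    obtain ⟨m, rfl⟩ := Nat.exists_eq_add_of_le' hm
    rw [Nat.add_sub_cancel, Nat.add_sub_cancel]
    change μ ((fun ω => Xr edge ω (k + 1) - Xr edge ω k) ⁻¹' {m + 1}) = _
    have hq1 : q ≠ 1 := fun h => by simp [← Subtype.coe_inj, hq] at h; linarith
    rw [← Measure.map_apply (hG.measurable_increment k) (measurableSet_singleton _),
      hG.map_increment_eq_incrementLaw hp0 hq, incrementLaw_singleton_succ hq1, hq, ← pow_mul,
      mul_comm]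
end
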